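/- Let K be a simplicial set with finitely many nondegenerate simplices, all of dimension ≤ n, and suppose σ is a nondegenerate n-simplex of K with n ≥ 1, with initial vertex s. Let K′ be the simplicial subset of K generated by all nondegenerate simplices other than σ, and let μ and μ′ denote the Möbius functions of K and K′ respectively (μ(x) = ∑_k (−1)^k · number of nondegenerate k-simplices with initial vertex x). Then K and K′ have the same vertices, μ(x) = μ′(x) for all vertices x ≠ s, and μ(s) = μ′(s) + (−1)^n. -/

import Mathlib

open CategoryTheory Opposite

/-- A simplex of a simplicial set is nondegenerate if it is not in the image of any
degeneracy map. (Every 0-simplex is nondegenerate.) -/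
def SSet.Nondeg (K : SSet) : (n : ℕ) → K.obj (op (SimplexCategory.mk n)) → Prop
  | 0, _ => True
  | n + 1, σ => ¬ ∃ (i : Fin (n + 1)) (τ : K.obj (op (SimplexCategory.mk n))), σ = K.map (SimplexCategory.σ i).op τ

/-- A simplicial set has finitely many nondegenerate simplices. -/
def SSet.FinNondeg (K : SSet) : Prop :=
  (∀ n : ℕ, {σ : K.obj (op (SimplexCategory.mk n)) | K.Nondeg n σ}.Finite) ∧
    ∃ N : ℕ, ∀ n ≥ N, ∀ σ : K.obj (op (SimplexCategory.mk n)), ¬ K.Nondeg n σ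

/-- The initial vertex of an `n`-simplex, induced by `[0] → [n]`, `0 ↦ 0`. -/
def SSet.initVertex (K : SSet) (n : ℕ) (σ : K.obj (op (SimplexCategory.mk n))) : K.obj (op (SimplexCategory.mk 0)) :=
  K.map (SimplexCategory.mkHom (OrderHom.const _ (0 : Fin (n + 1)))).op σ

/-- The combinatorial Euler characteristic: the alternating sum of the numbers of
nondegenerate simplices. -/
noncomputable def SSet.chi (K : SSet) : ℤ :=
  ∑ᶠ n : ℕ, (-1 : ℤ) ^ n * (Nat.card {σ : K.obj (op (SimplexCategory.mk n)) // K.Nondeg n σ} : ℤ)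

/-- The Möbius function of a simplicial set at a vertex `x`: the alternating sum of the
numbers of nondegenerate simplices with initial vertex `x`. -/
noncomputable def SSet.mob (K : SSet) (x : K.obj (op (SimplexCategory.mk 0))) : ℤ :=
  ∑ᶠ n : ℕ, (-1 : ℤ) ^ n *
    (Nat.card {σ : K.obj (op (SimplexCategory.mk n)) // K.Nondeg n σ ∧ K.initVertex n σ = x} : ℤ)

/-! Nondegeneracy of a simplex of `K'` can be tested in `K`, so the nondegenerate simplices of
`K'` with initial vertex `x` are those of `K` with initial vertex `ι x` that lie in the image of
`ι`. The only nondegenerate simplex of `K` outside that image is `σ` itself: a degeneracy of `σ`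
lives in dimension `≥ n`, and in dimension `n` it is `σ`. So the counts defining the Möbius
functions agree, except in dimension `n` at the initial vertex of `σ`, where `K` has one more. -/

namespace SSet

open scoped Simplicial

variable {K K' : SSet}

lemma nondeg_iff_mem_nonDegenerate {m : ℕ} (τ : K _⦋m⦌) :
    K.Nondeg m τ ↔ τ ∈ K.nonDegenerate m := by
  cases m with
  | zero => simp [Nondeg]
  | succ m =>
    simp [Nondeg, mem_nonDegenerate_iff_notMem_degenerate, degenerate_eq_iUnion_range_σ,
      SimplicialObject.σ_def, eq_comm]

lemma nondeg_app_iff_of_mono (ι : K' ⟶ K) [Mono ι] {m : ℕ} (τ : K' _⦋m⦌) :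
    K.Nondeg m (ι.app _ τ) ↔ K'.Nondeg m τ := by
  simp only [nondeg_iff_mem_nonDegenerate, nonDegenerate_iff_of_mono]

lemma initVertex_app (ι : K' ⟶ K) {m : ℕ} (τ : K' _⦋m⦌) :
    K.initVertex m (ι.app _ τ) = ι.app _ (K'.initVertex m τ) :=
  (NatTrans.naturality_apply ι _ τ).symm

def nondegFrom (K : SSet) (m : ℕ) (x : K _⦋0⦌) : Set (K _⦋m⦌) :=
  {τ | K.Nondeg m τ ∧ K.initVertex m τ = x}

lemma image_nondegFrom_of_mono (ι : K' ⟶ K) [Mono ι] (m : ℕ) (x : K' _⦋0⦌) :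
    ι.app _ '' K'.nondegFrom m x = K.nondegFrom m (ι.app _ x) ∩ Set.range (ι.app _) := by
  have hinj : Function.Injective (ι.app (op ⦋0⦌)) := injective_of_mono _
  ext τ
  constructor
  · rintro ⟨τ', ⟨hnd, rfl⟩, rfl⟩
    exact ⟨⟨(nondeg_app_iff_of_mono ι τ').2 hnd, initVertex_app ι τ'⟩, τ', rfl⟩
  · rintro ⟨⟨hnd, hinit⟩, τ', rfl⟩
    rw [initVertex_app] at hinit
    exact ⟨τ', ⟨(nondeg_app_iff_of_mono ι τ').1 hnd, hinj hinit⟩, rfl⟩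

lemma card_nondegFrom_of_mono (ι : K' ⟶ K) [Mono ι] (m : ℕ) (x : K' _⦋0⦌) :
    Nat.card (K'.nondegFrom m x) =
      Nat.card ↥(K.nondegFrom m (ι.app _ x) ∩ Set.range (ι.app _)) := by
  rw [← image_nondegFrom_of_mono, Nat.card_image_of_injective (injective_of_mono _)]

lemma mob_eq_sum_range {n : ℕ} (hdim : ∀ m > n, ∀ τ : K _⦋m⦌, ¬ K.Nondeg m τ) (x : K _⦋0⦌) :
    K.mob x = ∑ m ∈ Finset.range (n + 1), (-1 : ℤ) ^ m * (Nat.card (K.nondegFrom m x) : ℤ) := by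
  refine finsum_eq_sum_of_support_subset
    (fun m => (-1 : ℤ) ^ m * (Nat.card (K.nondegFrom m x) : ℤ)) fun m hm => ?_
  by_contra hgt
  have hempty : K.nondegFrom m x = ∅ :=
    Set.eq_empty_of_forall_notMem fun τ hτ => hdim m (by simpa using hgt) τ hτ.1
  simp [hempty] at hm

def RemovesSimplex (ι : K' ⟶ K) {n : ℕ} (σ : K _⦋n⦌) : Prop :=
  ∀ m : ℕ, Set.range (ι.app (op ⦋m⦌)) =
    {τ : K _⦋m⦌ | ¬ ∃ α : ⦋m⦌ ⟶ ⦋n⦌, Function.Surjective α.toOrderHom ∧ τ = K.map α.op σ}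

namespace RemovesSimplex

variable {n : ℕ} {σ : K _⦋n⦌} {ι : K' ⟶ K}

lemma mem_range_of_lt (h : RemovesSimplex ι σ) {m : ℕ} (hm : m < n) (τ : K _⦋m⦌) :
    τ ∈ Set.range (ι.app _) := by
  rw [h m]
  rintro ⟨α, hα, -⟩
  have : Epi α := SimplexCategory.epi_iff_surjective.2 hα
  have : n ≤ m := SimplexCategory.len_le_of_epi α
  omega

lemma mem_range_iff_ne (h : RemovesSimplex ι σ) (τ : K _⦋n⦌) :
    τ ∈ Set.range (ι.app _) ↔ τ ≠ σ := by
  rw [h n]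
  constructor
  · rintro hτ rfl
    exact hτ ⟨𝟙 _, Function.surjective_id, by simp⟩
  · rintro hne ⟨α, hα, rfl⟩
    have : Epi α := SimplexCategory.epi_iff_surjective.2 hα
    simp [SimplexCategory.eq_id_of_epi α] at hne

variable [Mono ι]

lemma card_nondegFrom_of_lt (h : RemovesSimplex ι σ) {m : ℕ} (hm : m < n) (x : K' _⦋0⦌) :
    Nat.card (K.nondegFrom m (ι.app _ x)) = Nat.card (K'.nondegFrom m x) := by
  rw [card_nondegFrom_of_mono ι, Set.inter_eq_left.2 fun τ _ => h.mem_range_of_lt hm τ]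

open scoped Classical in
lemma card_nondegFrom_top (h : RemovesSimplex ι σ) (hσ : K.Nondeg n σ) (x : K' _⦋0⦌)
    (hfin : (K.nondegFrom n (ι.app _ x)).Finite) :
    Nat.card (K.nondegFrom n (ι.app _ x)) =
      Nat.card (K'.nondegFrom n x) + if ι.app _ x = K.initVertex n σ then 1 else 0 := by
  have hrange : K.nondegFrom n (ι.app _ x) ∩ Set.range (ι.app _) =
      K.nondegFrom n (ι.app _ x) \ {σ} := by
    ext τ
    simp [h.mem_range_iff_ne]
  rw [card_nondegFrom_of_mono ι, hrange]
  split_ifs with hx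
  · have hσmem : σ ∈ K.nondegFrom n (ι.app _ x) := ⟨hσ, hx.symm⟩
    simp only [Nat.card_coe_set_eq]
    exact (Set.ncard_sdiff_singleton_add_one hσmem hfin).symm
  · rw [Set.sdiff_singleton_eq_self fun hσmem => hx hσmem.2.symm, add_zero]

open scoped Classical in
lemma mob_app (h : RemovesSimplex ι σ) (hfin : {τ : K _⦋n⦌ | K.Nondeg n τ}.Finite)
    (hdim : ∀ m > n, ∀ τ : K _⦋m⦌, ¬ K.Nondeg m τ) (hσ : K.Nondeg n σ) (x : K' _⦋0⦌) :
    K.mob (ι.app _ x) = K'.mob x + if ι.app _ x = K.initVertex n σ then (-1 : ℤ) ^ n else 0 := by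
  have hdim' : ∀ m > n, ∀ τ : K' _⦋m⦌, ¬ K'.Nondeg m τ := fun m hm τ hτ =>
    hdim m hm _ ((nondeg_app_iff_of_mono ι τ).2 hτ)
  rw [mob_eq_sum_range hdim, mob_eq_sum_range hdim', Finset.sum_range_succ,
    Finset.sum_range_succ, h.card_nondegFrom_top hσ x (hfin.subset fun τ hτ => hτ.1),
    Finset.sum_congr rfl fun m hm => by rw [h.card_nondegFrom_of_lt (Finset.mem_range.1 hm)]]
  split_ifs <;> push_cast <;> ring

end RemovesSimplex

end SSet

/-- Removing a top-dimensional nondegenerate `n`-simplex `σ` (with `n ≥ 1` and initial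
vertex `s`) from a finite simplicial set `K` yields a simplicial subset `K′` (the one
generated by all other nondegenerate simplices, whose `m`-simplices are exactly those
simplices of `K` that are not degeneracies of `σ`). Then `K` and `K′` have the same
vertices, their Möbius functions agree away from `s`, and `μ(s) = μ′(s) + (−1)ⁿ`. -/
theorem mob_remove_top_simplex (K K' : SSet) (hK : K.FinNondeg) (n : ℕ) (hn : 1 ≤ n)
    (hdim : ∀ m > n, ∀ τ : K.obj (op (SimplexCategory.mk m)), ¬ K.Nondeg m τ)
    (σ : K.obj (op (SimplexCategory.mk n))) (hσ : K.Nondeg n σ)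
    (ι : K' ⟶ K) (hmono : CategoryTheory.Mono ι)
    (himage : ∀ m : ℕ, Set.range (ι.app (op (SimplexCategory.mk m))) =
      {τ : K.obj (op (SimplexCategory.mk m)) |
        ¬ ∃ α : SimplexCategory.mk m ⟶ SimplexCategory.mk n,
          Function.Surjective α.toOrderHom ∧ τ = K.map α.op σ}) :
    Function.Bijective (ι.app (op (SimplexCategory.mk 0))) ∧
    (∀ x : K'.obj (op (SimplexCategory.mk 0)),
      ι.app (op (SimplexCategory.mk 0)) x ≠ K.initVertex n σ →
        K.mob (ι.app (op (SimplexCategory.mk 0)) x) = K'.mob x) ∧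
    (∀ x : K'.obj (op (SimplexCategory.mk 0)),
      ι.app (op (SimplexCategory.mk 0)) x = K.initVertex n σ →
        K.mob (ι.app (op (SimplexCategory.mk 0)) x) = K'.mob x + (-1 : ℤ) ^ n) := by
  have : Mono ι := hmono
  have h : SSet.RemovesSimplex ι σ := himage
  have hmob := h.mob_app (hK.1 n) hdim hσ
  refine ⟨⟨injective_of_mono _, fun y => h.mem_range_of_lt hn y⟩, fun x hx => ?_, fun x hx => ?_⟩
  · rw [hmob x, if_neg hx, add_zero]
  · rw [hmob x, if_pos hx]
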